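/- Let k ≥ 2 and p ≥ 2, and let F = S_{r_1} ∪ ⋯ ∪ S_{r_k} be a star forest where r_1 ≥ r_2 ≥ ⋯ ≥ r_k ≥ 1 are the maximum degrees of its components. Then there exists n_0 depending only on F such that for all n ≥ n_0: ex_p(n,F) = e_p(G(n,k,r_k)); explicitly, ex_p(n,F) = (k−1)(n−1)^p + (n−k+1)(r_k+k−2)^p if at least one of r_k−1 and n−k+1 is even, and ex_p(n,F) = (k−1)(n−1)^p + (n−k)(r_k+k−2)^p + (r_k+k−3)^p if both r_k−1 and n−k+1 are odd. Moreover, an F-free graph G on n vertices satisfies e_p(G) = ex_p(n,F) if and only if G is isomorphic to a graph G(n,k,r_k). -/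

import Mathlib

open Finset

namespace Paper

/-- `Copy H G`: `G` contains a subgraph isomorphic to `H`. -/
def Copy {α β : Type*} (H : SimpleGraph α) (G : SimpleGraph β) : Prop :=
  ∃ f : α ↪ β, ∀ a b, H.Adj a b → G.Adj (f a) (f b)

/-- `G` is `H`-free. -/
def Free {α β : Type*} (H : SimpleGraph α) (G : SimpleGraph β) : Prop := ¬ Copy H G

/-- Degree of a vertex. -/
noncomputable def degp {V : Type*} (G : SimpleGraph V) (v : V) : ℕ := (G.neighborSet v).ncard

/-- Degree power sum `e_p(G)`. -/
noncomputable def ep {V : Type*} [Fintype V] (p : ℕ) (G : SimpleGraph V) : ℕ :=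
  ∑ v, degp G v ^ p

/-- `ex_p(n, H)`. -/
noncomputable def exDP {α : Type*} (n p : ℕ) (H : SimpleGraph α) : ℕ :=
  sSup {m | ∃ G : SimpleGraph (Fin n), Free H G ∧ ep p G = m}

/-- Join `G + H`. -/
def joinG {α β : Type*} (G : SimpleGraph α) (H : SimpleGraph β) : SimpleGraph (α ⊕ β) :=
  SimpleGraph.fromRel (fun x y =>
    match x, y with
    | Sum.inl a, Sum.inl a' => G.Adj a a'
    | Sum.inr b, Sum.inr b' => H.Adj b b'
    | Sum.inl _, Sum.inr _ => True
    | Sum.inr _, Sum.inl _ => False)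

/-- `M_t`: maximum matching on `t` vertices. -/
def matchG (t : ℕ) : SimpleGraph (Fin t) :=
  SimpleGraph.fromRel (fun i j => (i : ℕ) / 2 = (j : ℕ) / 2)

/-- `S_r`: star with `r` leaves. -/
def starG (r : ℕ) : SimpleGraph (Fin (r + 1)) :=
  SimpleGraph.fromRel (fun i _ => i = 0)

/-- Disjoint union of graphs. -/
def forestG {k : ℕ} (m : Fin k → ℕ) (G : ∀ i, SimpleGraph (Fin (m i))) :
    SimpleGraph ((i : Fin k) × Fin (m i)) :=
  SimpleGraph.fromRel (fun x y => ∃ h : x.1 = y.1, (G y.1).Adj (h ▸ x.2) y.2)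

/-- Path on `t` vertices. -/
def pathG (t : ℕ) : SimpleGraph (Fin t) := SimpleGraph.pathGraph t

/-- `H(n, ℓ)`. -/
def HG (n ℓ : ℕ) : SimpleGraph (Fin n) :=
  SimpleGraph.fromRel (fun i j =>
    (i : ℕ) < ℓ / 2 - 1 ∨ (Odd ℓ ∧ (i : ℕ) = ℓ / 2 - 1 ∧ (j : ℕ) = ℓ / 2))

/-- `H(n, F)` for a linear forest with path orders `ℓ`. -/
def HGF (n : ℕ) {k : ℕ} (ℓ : Fin k → ℕ) : SimpleGraph (Fin n) :=
  SimpleGraph.fromRel (fun i j =>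
    (i : ℕ) < (∑ t, ℓ t / 2) - 1 ∨
    ((∀ t, Odd (ℓ t)) ∧ (i : ℕ) = (∑ t, ℓ t / 2) - 1 ∧ (j : ℕ) = ∑ t, ℓ t / 2))

/-- The broom `B_{ℓ,s}`. -/
def broomG (ℓ s : ℕ) : SimpleGraph (Fin (ℓ + s)) :=
  SimpleGraph.fromRel (fun i j =>
    ((i : ℕ) + 1 = (j : ℕ) ∧ (j : ℕ) < ℓ) ∨ ((i : ℕ) = ℓ - 2 ∧ ℓ ≤ (j : ℕ)))

/-- Near `(r-1)`-regular graph. -/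
def NearRegular {V : Type*} [Fintype V] (r : ℕ) (L : SimpleGraph V) : Prop :=
  if Even ((r - 1) * Fintype.card V) then ∀ v, degp L v = r - 1
  else ∃ w, degp L w = r - 2 ∧ ∀ v, v ≠ w → degp L v = r - 1


/-! ### basic lemmas -/

lemma degp_eq_degree {V : Type*} [Fintype V] (G : SimpleGraph V) [DecidableRel G.Adj] (v : V) :
    degp G v = G.degree v := by
  rw [degp, SimpleGraph.degree, ← Set.ncard_coe_finset]
  congr 1
  ext w
  simp

lemma degp_le {V : Type*} [Fintype V] (G : SimpleGraph V) (v : V) :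
    degp G v ≤ Fintype.card V - 1 := by
  classical
  rw [degp_eq_degree]
  have := G.degree_lt_card_verts v
  omega

lemma even_sum_degp {V : Type*} [Fintype V] (G : SimpleGraph V) :
    Even (∑ v, degp G v) := by
  classical
  simp only [degp_eq_degree]
  rw [SimpleGraph.sum_degrees_eq_twice_card_edges]
  exact ⟨_, (two_mul _)⟩

lemma degp_comap_equiv {V W : Type*} (e : V ≃ W) (G : SimpleGraph W) (v : V) :
    degp (G.comap e) v = degp G (e v) := by
  rw [degp, degp]
  have h1 : (G.comap e).neighborSet v = e ⁻¹' (G.neighborSet (e v)) := rfl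
  rw [h1, ← Equiv.image_symm_eq_preimage, Set.ncard_image_of_injective _ e.symm.injective]

lemma degp_iso {V W : Type*} (φ : V ≃ W) {G : SimpleGraph V} {H : SimpleGraph W}
    (hφ : ∀ a b, G.Adj a b ↔ H.Adj (φ a) (φ b)) (v : V) :
    degp G v = degp H (φ v) := by
  have : G = H.comap φ := by
    ext a b; exact hφ a b
  rw [this, degp_comap_equiv]

lemma ep_iso {V W : Type*} [Fintype V] [Fintype W] {G : SimpleGraph V} {H : SimpleGraph W}
    (φ : G ≃g H) (p : ℕ) : ep p G = ep p H := by
  rw [ep, ep, ← Equiv.sum_comp (φ.toEquiv) (fun w => degp H w ^ p)]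
  refine Finset.sum_congr rfl fun v _ => ?_
  rw [degp_iso φ.toEquiv (fun a b => (φ.map_adj_iff).symm) v]

lemma copy_of_iso {α V W : Type*} {F : SimpleGraph α} {G : SimpleGraph V} {H : SimpleGraph W}
    (φ : G ≃g H) : Copy F G → Copy F H := by
  rintro ⟨f, hf⟩
  exact ⟨f.trans φ.toEquiv.toEmbedding, fun a b hab => φ.map_adj_iff.2 (by simpa using hf a b hab)⟩

lemma free_iso {α V W : Type*} {F : SimpleGraph α} {G : SimpleGraph V} {H : SimpleGraph W}
    (φ : G ≃g H) (h : Free F G) : Free F H :=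
  fun hc => h (copy_of_iso φ.symm hc)


section join
variable {α β : Type*} (L : SimpleGraph β)

@[simp] lemma joinG_adj_ll (a a' : α) :
    (joinG (⊤ : SimpleGraph α) L).Adj (Sum.inl a) (Sum.inl a') ↔ a ≠ a' := by
  rw [joinG, SimpleGraph.fromRel_adj]
  constructor
  · rintro ⟨h, h1 | h1⟩
    exacts [h1.ne, (h1.ne).symm]
  · intro h; exact ⟨by simp [h], Or.inl h⟩

@[simp] lemma joinG_adj_lr (a : α) (b : β) :
    (joinG (⊤ : SimpleGraph α) L).Adj (Sum.inl a) (Sum.inr b) := by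
  rw [joinG, SimpleGraph.fromRel_adj]
  exact ⟨by simp, Or.inl trivial⟩

@[simp] lemma joinG_adj_rl (a : α) (b : β) :
    (joinG (⊤ : SimpleGraph α) L).Adj (Sum.inr b) (Sum.inl a) := by
  exact ((joinG_adj_lr L a b)).symm

@[simp] lemma joinG_adj_rr (b b' : β) :
    (joinG (⊤ : SimpleGraph α) L).Adj (Sum.inr b) (Sum.inr b') ↔ L.Adj b b' := by
  rw [joinG, SimpleGraph.fromRel_adj]
  constructor
  · rintro ⟨h, h1 | h1⟩; exacts [h1, h1.symm]
  · intro h; exact ⟨by simp [h.ne], Or.inl h⟩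

variable [Fintype α] [Fintype β]

lemma degp_joinG_inl (a : α) :
    degp (joinG (⊤ : SimpleGraph α) L) (Sum.inl a) = Fintype.card α - 1 + Fintype.card β := by
  classical
  rw [degp]
  have h1 : (joinG (⊤ : SimpleGraph α) L).neighborSet (Sum.inl a)
      = Sum.inl '' ({a}ᶜ) ∪ Sum.inr '' Set.univ := by
    ext x
    cases x with
    | inl c => simp [SimpleGraph.mem_neighborSet, eq_comm, ne_comm]
    | inr b => simp [SimpleGraph.mem_neighborSet]
  rw [h1, Set.ncard_union_eq]
  · rw [Set.ncard_image_of_injective _ Sum.inl_injective,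
      Set.ncard_image_of_injective _ Sum.inr_injective]
    congr 1
    · simp [Set.ncard_eq_toFinset_card', Set.toFinset_compl, Finset.card_compl]
    · rw [Set.ncard_univ, Nat.card_eq_fintype_card]
  · rw [Set.disjoint_left]; rintro x ⟨c, -, rfl⟩ ⟨d, -, h⟩; exact Sum.inl_ne_inr h.symm

lemma degp_joinG_inr (b : β) :
    degp (joinG (⊤ : SimpleGraph α) L) (Sum.inr b) = Fintype.card α + degp L b := by
  classical
  rw [degp, degp]
  have h1 : (joinG (⊤ : SimpleGraph α) L).neighborSet (Sum.inr b)
      = Sum.inl '' Set.univ ∪ Sum.inr '' (L.neighborSet b) := by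
    ext x
    cases x with
    | inl c => simp [SimpleGraph.mem_neighborSet]
    | inr b' => simp [SimpleGraph.mem_neighborSet]
  rw [h1, Set.ncard_union_eq]
  · rw [Set.ncard_image_of_injective _ Sum.inl_injective,
      Set.ncard_image_of_injective _ Sum.inr_injective, Set.ncard_univ, Nat.card_eq_fintype_card]
  · rw [Set.disjoint_left]; rintro x ⟨c, -, rfl⟩ ⟨d, -, h⟩; exact Sum.inl_ne_inr h.symm

lemma ep_joinG (p : ℕ) :
    ep p (joinG (⊤ : SimpleGraph α) L)
      = Fintype.card α * (Fintype.card α - 1 + Fintype.card β) ^ p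
        + ∑ b, (Fintype.card α + degp L b) ^ p := by
  rw [ep, Fintype.sum_sum_type]
  congr 1
  · rw [Finset.sum_congr rfl fun a _ => by rw [degp_joinG_inl], Finset.sum_const,
      Finset.card_univ, smul_eq_mul]
  · exact Finset.sum_congr rfl fun b _ => by rw [degp_joinG_inr]

/-- Freeness of the join when `L` has max degree `< ρ` -/
lemma joinG_free {k : ℕ} (r : Fin k → ℕ) (ρ : ℕ) (hρ : ∀ i, ρ ≤ r i)
    (hcard : Fintype.card α < k)
    (hL : ∀ b, degp L b < ρ) :
    Free (forestG (fun i => r i + 1) (fun i => starG (r i))) (joinG (⊤ : SimpleGraph α) L) := by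
  classical
  rintro ⟨f, hf⟩
  -- find a star mapped entirely into the `inr` part
  have key : ∃ i : Fin k, ∀ a : Fin (r i + 1), ∃ b, f ⟨i, a⟩ = Sum.inr b := by
    by_contra hcon
    push_neg at hcon
    have hcon2 : ∀ i : Fin k, ∃ (a : Fin (r i + 1)) (c : α), f ⟨i, a⟩ = Sum.inl c := by
      intro i
      obtain ⟨a, ha⟩ := hcon i
      rcases hfa : f ⟨i, a⟩ with c | b
      · exact ⟨a, c, hfa⟩
      · exact absurd hfa (ha b)
    choose a w hw using hcon2
    have hinj : Function.Injective w := by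
      intro i j hij
      have h2 : f ⟨i, a i⟩ = f ⟨j, a j⟩ := by rw [hw i, hw j, hij]
      exact congrArg Sigma.fst (f.injective h2)
    have := Fintype.card_le_of_injective w hinj
    simp [Fintype.card_fin] at this
    omega
  obtain ⟨i, hi⟩ := key
  obtain ⟨b0, hb0⟩ := hi 0
  choose bb hbb using fun c : Fin (r i) => hi c.succ
  -- bb maps into neighbors of b0 in L
  have hadjF : ∀ c : Fin (r i),
      (forestG (fun i => r i + 1) (fun i => starG (r i))).Adj ⟨i, 0⟩ ⟨i, c.succ⟩ := by
    intro c
    rw [forestG, SimpleGraph.fromRel_adj]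
    refine ⟨?_, Or.inl ⟨rfl, ?_⟩⟩
    · simp only [ne_eq, Sigma.mk.inj_iff, heq_eq_eq, true_and]
      exact fun h => Fin.succ_ne_zero c h.symm
    rw [starG, SimpleGraph.fromRel_adj]
    exact ⟨Ne.symm (Fin.succ_ne_zero c), Or.inl rfl⟩
  have hL' : ∀ c : Fin (r i), L.Adj b0 (bb c) := by
    intro c
    have := hf _ _ (hadjF c)
    rw [hb0, hbb c] at this
    exact (joinG_adj_rr L b0 (bb c)).1 this
  have hinj2 : Function.Injective bb := by
    intro c d hcd
    have h3 : f ⟨i, c.succ⟩ = f ⟨i, d.succ⟩ := by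
      rw [hbb c, hbb d]; exact congrArg _ hcd
    have this2 := f.injective h3
    rw [Sigma.mk.inj_iff] at this2
    exact Fin.succ_injective _ (eq_of_heq this2.2)
  -- so degp L b0 ≥ r i ≥ ρ
  have hdeg : r i ≤ degp L b0 := by
    rw [degp]
    have huniv : (Set.univ : Set (Fin (r i))).ncard = r i := by
      simp [Set.ncard_univ]
    have hsub : Set.univ ⊆ bb ⁻¹' (L.neighborSet b0) := fun c _ => hL' c
    calc r i = (Set.univ : Set (Fin (r i))).ncard := huniv.symm
      _ ≤ (bb ⁻¹' (L.neighborSet b0)).ncard :=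
          Set.ncard_le_ncard hsub (Set.toFinite _)
      _ = (bb '' (bb ⁻¹' (L.neighborSet b0))).ncard :=
          (Set.ncard_image_of_injective _ hinj2).symm
      _ ≤ (L.neighborSet b0).ncard :=
          Set.ncard_le_ncard (Set.image_preimage_subset _ _) (Set.toFinite _)
  have := hL b0
  have := hρ i
  omega

end join

lemma exists_disjoint_nbr_sets {V : Type*} [DecidableEq V] [Fintype V] (G : SimpleGraph V)
    [DecidableRel G.Adj] :
    ∀ (k : ℕ) (r : Fin k → ℕ) (v : Fin k → V) (C : Finset V),
    (∀ i, (∑ j, if i ≤ j then r j else 0) ≤ ((G.neighborFinset (v i)) \ C).card) →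
    ∃ N : Fin k → Finset V, (∀ i, N i ⊆ G.neighborFinset (v i) \ C) ∧ (∀ i, (N i).card = r i)
      ∧ ∀ i j, i ≠ j → Disjoint (N i) (N j) := by
  intro k
  induction k with
  | zero =>
    intro r v C _
    exact ⟨fun i => ∅, fun i => i.elim0, fun i => i.elim0, fun i => i.elim0⟩
  | succ k ih =>
    intro r v C h
    have hsum0 : ∑ j : Fin k, (if Fin.last k ≤ j.castSucc then r j.castSucc else 0) = 0 := by
      refine Finset.sum_eq_zero fun j _ => ?_
      rw [if_neg]
      rw [Fin.last_le_iff]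
      exact (Fin.castSucc_lt_last j).ne
    have hlast : r (Fin.last k) ≤ ((G.neighborFinset (v (Fin.last k))) \ C).card := by
      calc r (Fin.last k) = ∑ j, if Fin.last k ≤ j then r j else 0 := by
            rw [Fin.sum_univ_castSucc, hsum0, if_pos le_rfl, zero_add]
        _ ≤ _ := h (Fin.last k)
    obtain ⟨Nl, hNl, hNlcard⟩ := Finset.exists_subset_card_eq hlast
    have hsdiff : ∀ u : V, G.neighborFinset u \ (C ∪ Nl) = (G.neighborFinset u \ C) \ Nl := by
      intro u; ext x; simp; tauto
    obtain ⟨N', hN'sub, hN'card, hN'disj⟩ :=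
      ih (fun i => r i.castSucc) (fun i => v i.castSucc) (C ∪ Nl) (by
        intro i
        show (∑ j : Fin k, if i ≤ j then r j.castSucc else 0)
          ≤ ((G.neighborFinset (v i.castSucc)) \ (C ∪ Nl)).card
        rw [hsdiff]
        have h1 := Finset.le_card_sdiff Nl (G.neighborFinset (v i.castSucc) \ C)
        have h2 := h i.castSucc
        have h3 : (∑ j, if i.castSucc ≤ j then r j else 0)
            = (∑ j : Fin k, if i ≤ j then r j.castSucc else 0) + r (Fin.last k) := by
          rw [Fin.sum_univ_castSucc, if_pos (Fin.le_last _)]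
          simp [Fin.castSucc_le_castSucc_iff]
        omega)
    have key : ∀ (i' : Fin k), Disjoint Nl (N' i') := by
      intro i'
      rw [Finset.disjoint_right]
      intro x hx
      have hmem := hN'sub i' hx
      rw [hsdiff, Finset.mem_sdiff] at hmem
      exact hmem.2
    refine ⟨Fin.lastCases Nl N', ?_, ?_, ?_⟩
    · intro i
      induction i using Fin.lastCases with
      | last => simpa using hNl
      | cast j =>
        simp only [Fin.lastCases_castSucc]
        intro x hx
        have hmem := hN'sub j hx
        rw [hsdiff] at hmem
        exact Finset.sdiff_subset hmem
    · intro i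
      induction i using Fin.lastCases with
      | last => simpa using hNlcard
      | cast j => simpa using hN'card j
    · intro i j hij
      induction i using Fin.lastCases with
      | last =>
        induction j using Fin.lastCases with
        | last => exact absurd rfl hij
        | cast j' => simpa using key j'
      | cast i' =>
        induction j using Fin.lastCases with
        | last => simpa using (key i').symm
        | cast j' =>
          simp only [Fin.lastCases_castSucc]
          exact hN'disj i' j' (fun hcon => hij (congrArg Fin.castSucc hcon))

lemma copy_of_centers {V : Type*} [Fintype V] [DecidableEq V] (G : SimpleGraph V)
    [DecidableRel G.Adj] {k : ℕ} (r : Fin k → ℕ) (v : Fin k → V) (hv : Function.Injective v)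
    (h : ∀ i, (∑ j, if i ≤ j then r j else 0)
      ≤ ((G.neighborFinset (v i)) \ (Finset.image v Finset.univ)).card) :
    Copy (forestG (fun i => r i + 1) (fun i => starG (r i))) G := by
  classical
  set C : Finset V := Finset.image v Finset.univ with hC
  obtain ⟨N, hNsub, hNcard, hNdisj⟩ := exists_disjoint_nbr_sets G k r v C h
  let emb : ∀ i, Fin (r i) ≃ {x // x ∈ N i} := fun i => ((N i).equivFinOfCardEq (hNcard i)).symm
  let f : ((i : Fin k) × Fin (r i + 1)) → V := fun x =>
    Fin.cases (v x.1) (fun b => (emb x.1 b : V)) x.2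
  have hf0 : ∀ i, f ⟨i, 0⟩ = v i := fun i => rfl
  have hfs : ∀ (i : Fin k) (c : Fin (r i)), f ⟨i, c.succ⟩ = (emb i c : V) := fun i c => by
    simp only [f, Fin.cases_succ]
  have hmem : ∀ (i : Fin k) (c : Fin (r i)), (emb i c : V) ∈ G.neighborFinset (v i) \ C :=
    fun i c => hNsub i (emb i c).2
  have hmemN : ∀ (i : Fin k) (c : Fin (r i)), (emb i c : V) ∈ N i := fun i c => (emb i c).2
  have hinj : Function.Injective f := by
    rintro ⟨i, a⟩ ⟨j, b⟩ hab
    induction a using Fin.cases with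
    | zero =>
      induction b using Fin.cases with
      | zero =>
        rw [hf0, hf0] at hab
        have hij := hv hab
        subst hij; rfl
      | succ d =>
        rw [hf0, hfs] at hab
        have hd := hmem j d
        rw [Finset.mem_sdiff] at hd
        exact absurd (hab ▸ Finset.mem_image_of_mem v (Finset.mem_univ i)) hd.2
    | succ c =>
      induction b using Fin.cases with
      | zero =>
        rw [hfs, hf0] at hab
        have hd := hmem i c
        rw [Finset.mem_sdiff] at hd
        exact absurd (hab ▸ Finset.mem_image_of_mem v (Finset.mem_univ j)) hd.2
      | succ d =>
        rw [hfs, hfs] at hab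
        by_cases hij : i = j
        · subst hij
          have : emb i c = emb i d := Subtype.ext hab
          have hcd : c = d := (emb i).injective this
          subst hcd; rfl
        · exfalso
          have h1 := hmemN i c
          have h2 := hmemN j d
          rw [hab] at h1
          exact Finset.disjoint_left.1 (hNdisj i j hij) (hab ▸ hmemN i c) h2
  have main : ∀ (i : Fin k) (x y : Fin (r i + 1)),
      (starG (r i)).Adj x y → G.Adj (f ⟨i, x⟩) (f ⟨i, y⟩) := by
    intro i x y hxy
    rw [starG, SimpleGraph.fromRel_adj] at hxy
    obtain ⟨hne, h0 | h0⟩ := hxy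
    · subst h0
      obtain ⟨c, rfl⟩ := Fin.eq_succ_of_ne_zero (Ne.symm hne)
      have hd := hmem i c
      rw [Finset.mem_sdiff, SimpleGraph.mem_neighborFinset] at hd
      rw [hf0, hfs]
      exact hd.1
    · subst h0
      obtain ⟨c, rfl⟩ := Fin.eq_succ_of_ne_zero hne
      have hd := hmem i c
      rw [Finset.mem_sdiff, SimpleGraph.mem_neighborFinset] at hd
      rw [hf0, hfs]
      exact hd.1.symm
  refine ⟨⟨f, hinj⟩, ?_⟩
  rintro ⟨i, x⟩ ⟨j, y⟩ hab
  rw [forestG, SimpleGraph.fromRel_adj] at hab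
  obtain ⟨hne, ⟨hij, hstar⟩ | ⟨hij, hstar⟩⟩ := hab
  · dsimp only at hij
    subst hij
    exact main i x y hstar
  · dsimp only at hij
    subst hij
    exact (main j y x hstar).symm


section circ
variable {m : ℕ} [NeZero m]

def circ (S : Finset (ZMod m)) (h0 : (0 : ZMod m) ∉ S) (hs : ∀ s ∈ S, -s ∈ S) :
    SimpleGraph (ZMod m) where
  Adj x y := x - y ∈ S
  symm := by
    constructor
    intro x y h
    have := hs _ h
    rw [neg_sub] at this
    exact this
  loopless := by
    constructor
    intro x h
    rw [sub_self] at h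
    exact h0 h

lemma circ_adj (S : Finset (ZMod m)) (h0 : (0:ZMod m) ∉ S) (hs) (x y : ZMod m) :
    (circ S h0 hs).Adj x y ↔ x - y ∈ S := Iff.rfl

lemma nbhd_circ (S : Finset (ZMod m)) (h0 : (0:ZMod m) ∉ S) (hs) (x : ZMod m) :
    (circ S h0 hs).neighborSet x = (fun s => x - s) '' (S : Set (ZMod m)) := by
  ext y
  simp only [SimpleGraph.mem_neighborSet, Set.mem_image, Finset.mem_coe]
  constructor
  · intro h
    exact ⟨x - y, h, by ring⟩
  · rintro ⟨s, hsS, rfl⟩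
    show x - (x - s) ∈ S
    simpa using hsS

lemma degp_circ (S : Finset (ZMod m)) (h0 : (0:ZMod m) ∉ S) (hs) (x : ZMod m) :
    degp (circ S h0 hs) x = S.card := by
  rw [degp, nbhd_circ, Set.ncard_image_of_injective _ sub_right_injective,
    Set.ncard_coe_finset]

lemma card_filter_val (P : ℕ → Prop) [DecidablePred P] :
    (Finset.univ.filter (fun x : ZMod m => P x.val)).card = ((Finset.range m).filter P).card := by
  refine Finset.card_bij (fun x _ => x.val) ?_ ?_ ?_
  · intro a ha
    simp only [Finset.mem_filter, Finset.mem_univ, true_and] at ha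
    simp only [Finset.mem_filter, Finset.mem_range]
    exact ⟨ZMod.val_lt a, ha⟩
  · intro a _ b _ hab
    exact ZMod.val_injective m hab
  · intro b hb
    simp only [Finset.mem_filter, Finset.mem_range] at hb
    refine ⟨(b : ZMod m), ?_, ZMod.val_cast_of_lt hb.1⟩
    simp only [Finset.mem_filter, Finset.mem_univ, true_and]
    rw [ZMod.val_cast_of_lt hb.1]
    exact hb.2

def tset (m t : ℕ) [NeZero m] : Finset (ZMod m) :=
  Finset.univ.filter (fun x : ZMod m => (1 ≤ x.val ∧ x.val ≤ t) ∨ m - t ≤ x.val)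

lemma mem_tset {t : ℕ} (x : ZMod m) :
    x ∈ tset m t ↔ ((1 ≤ x.val ∧ x.val ≤ t) ∨ m - t ≤ x.val) := by
  simp [tset]

lemma zero_not_mem_tset {t : ℕ} (hm : 2 * t + 1 ≤ m) : (0 : ZMod m) ∉ tset m t := by
  rw [mem_tset, ZMod.val_zero]
  omega

lemma val_eq_zero_iff (x : ZMod m) : x.val = 0 ↔ x = 0 := by
  constructor
  · intro h
    have := ZMod.natCast_val (R := ZMod m) x
    rw [ZMod.cast_id] at this
    rw [← this, h, Nat.cast_zero]
  · rintro rfl; exact ZMod.val_zero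

lemma neg_mem_tset {t : ℕ} (hm : 2 * t + 1 ≤ m) (x : ZMod m) (hx : x ∈ tset m t) :
    -x ∈ tset m t := by
  rw [mem_tset] at hx ⊢
  have hne : x ≠ 0 := by
    intro h
    rw [h, ZMod.val_zero] at hx
    omega
  have hv : x.val ≠ 0 := fun h => hne ((val_eq_zero_iff x).1 h)
  have hlt : x.val < m := ZMod.val_lt x
  rw [ZMod.neg_val, if_neg hne]
  omega

lemma card_tset {t : ℕ} (hm : 2 * t + 1 ≤ m) : (tset m t).card = 2 * t := by
  rw [tset, card_filter_val (fun y => (1 ≤ y ∧ y ≤ t) ∨ m - t ≤ y)]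
  have : (Finset.range m).filter (fun x => (1 ≤ x ∧ x ≤ t) ∨ m - t ≤ x)
      = Finset.Icc 1 t ∪ Finset.Icc (m - t) (m - 1) := by
    ext x
    simp only [Finset.mem_filter, Finset.mem_range, Finset.mem_union, Finset.mem_Icc]
    omega
  rw [this, Finset.card_union_of_disjoint, Nat.card_Icc, Nat.card_Icc]
  · omega
  · rw [Finset.disjoint_left]
    intro a ha hb
    simp only [Finset.mem_Icc] at ha hb
    omega

lemma val_mem_tset {t : ℕ} (hm : 2 * t + 1 ≤ m) (x : ZMod m) (hx : x ∈ tset m t) :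
    (1 ≤ x.val ∧ x.val ≤ t) ∨ (m - t ≤ x.val ∧ x.val ≤ m - 1) := by
  rw [mem_tset] at hx
  have := ZMod.val_lt x
  omega

lemma natCast_val_self (x : ZMod m) : ((x.val : ℕ) : ZMod m) = x := by
  rw [ZMod.natCast_val, ZMod.cast_id]

/-- Even-degree circulant or odd-degree on even `m`. -/
lemma exists_regular (d : ℕ) (hpar : Even d ∨ Even m) (hm : 2 * d + 3 ≤ m) :
    ∃ L : SimpleGraph (ZMod m), ∀ v, degp L v = d := by
  rcases hpar with hd | hmeven
  · obtain ⟨t, ht⟩ := hd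
    have ht' : d = 2 * t := by omega
    subst ht'
    have hmt : 2 * t + 1 ≤ m := by omega
    refine ⟨circ (tset m t) (zero_not_mem_tset hmt) (neg_mem_tset hmt), fun v => ?_⟩
    rw [degp_circ, card_tset hmt]
  · rcases Nat.even_or_odd d with hd | hd
    · obtain ⟨t, ht⟩ := hd
      have ht' : d = 2 * t := by omega
      subst ht'
      have hmt : 2 * t + 1 ≤ m := by omega
      refine ⟨circ (tset m t) (zero_not_mem_tset hmt) (neg_mem_tset hmt), fun v => ?_⟩
      rw [degp_circ, card_tset hmt]
    · obtain ⟨t, ht⟩ := hd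
      subst ht
      have hmt : 2 * t + 1 ≤ m := by omega
      have hm2 : m / 2 < m := by omega
      set η : ZMod m := ((m / 2 : ℕ) : ZMod m) with hη
      have hval : η.val = m / 2 := ZMod.val_cast_of_lt hm2
      have hη0 : η ≠ 0 := by
        intro h
        rw [h, ZMod.val_zero] at hval
        omega
      have hηtset : η ∉ tset m t := by
        rw [mem_tset, hval]
        obtain ⟨c, hc⟩ := hmeven
        omega
      have hnegη : -η = η := by
        have : η + η = 0 := by
          rw [hη, ← Nat.cast_add]
          obtain ⟨c, hc⟩ := hmeven
          have : m / 2 + m / 2 = m := by omega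
          rw [this, ZMod.natCast_self]
        exact neg_eq_of_add_eq_zero_left this
      have h0' : (0 : ZMod m) ∉ tset m t ∪ {η} := by
        rw [Finset.mem_union, Finset.mem_singleton]
        push_neg
        exact ⟨zero_not_mem_tset hmt, fun h => hη0 h.symm⟩
      have hs' : ∀ s ∈ tset m t ∪ {η}, -s ∈ tset m t ∪ {η} := by
        intro s hsmem
        rw [Finset.mem_union, Finset.mem_singleton] at hsmem ⊢
        rcases hsmem with hsmem | rfl
        · exact Or.inl (neg_mem_tset hmt s hsmem)
        · exact Or.inr hnegη
      refine ⟨circ (tset m t ∪ {η}) h0' hs', fun v => ?_⟩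
      rw [degp_circ]
      rw [Finset.card_union_of_disjoint (Finset.disjoint_singleton_right.2 hηtset),
        card_tset hmt, Finset.card_singleton]

/-- the near-perfect matching graph on odd `m = 2h+1`. -/
def matchg (m h : ℕ) [NeZero m] (hh : 1 ≤ h) : SimpleGraph (ZMod m) where
  Adj x y := (x.val + h = y.val ∧ x.val < h) ∨ (y.val + h = x.val ∧ y.val < h)
  symm := by
    constructor
    intro x y hxy
    tauto
  loopless := by
    constructor
    intro x hx
    rcases hx with ⟨h1, _⟩ | ⟨h1, _⟩ <;> omega

lemma nbhd_matchg {h : ℕ} (hh : 1 ≤ h) (hm : m = 2 * h + 1) (x : ZMod m) :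
    (matchg m h hh).neighborSet x =
      if x.val < h then {((x.val + h : ℕ) : ZMod m)}
      else if x.val = 2 * h then (∅ : Set (ZMod m))
      else {((x.val - h : ℕ) : ZMod m)} := by
  have hxlt : x.val < m := ZMod.val_lt x
  ext y
  have hylt : y.val < m := ZMod.val_lt y
  simp only [SimpleGraph.mem_neighborSet]
  split_ifs with h1 h2
  · simp only [Set.mem_singleton_iff]
    constructor
    · rintro (⟨ha, _⟩ | ⟨ha, hb⟩)
      · apply ZMod.val_injective
        rw [ZMod.val_cast_of_lt (by omega : x.val + h < m)]
        omega
      · omega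
    · intro hy
      subst hy
      left
      rw [ZMod.val_cast_of_lt (by omega : x.val + h < m)]
      omega
  · simp only [Set.mem_empty_iff_false, iff_false]
    rintro (⟨ha, hb⟩ | ⟨ha, hb⟩) <;> omega
  · simp only [Set.mem_singleton_iff]
    constructor
    · rintro (⟨ha, hb⟩ | ⟨ha, hb⟩)
      · omega
      · apply ZMod.val_injective
        rw [ZMod.val_cast_of_lt (by omega : x.val - h < m)]
        omega
    · intro hy
      subst hy
      right
      rw [ZMod.val_cast_of_lt (by omega : x.val - h < m)]
      omega

lemma matchg_sub {h : ℕ} (hh : 1 ≤ h) {x y : ZMod m}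
    (hxy : (matchg m h hh).Adj x y) :
    x - y = -((h : ℕ) : ZMod m) ∨ x - y = ((h : ℕ) : ZMod m) := by
  have hylt : y.val < m := ZMod.val_lt y
  have hxlt : x.val < m := ZMod.val_lt x
  rcases hxy with ⟨ha, _⟩ | ⟨ha, _⟩
  · left
    have hy : y = ((x.val + h : ℕ) : ZMod m) := by
      apply ZMod.val_injective
      rw [ZMod.val_cast_of_lt (by omega : x.val + h < m)]
      omega
    rw [hy, Nat.cast_add, natCast_val_self]
    ring
  · right
    have hx : x = ((y.val + h : ℕ) : ZMod m) := by
      apply ZMod.val_injective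
      rw [ZMod.val_cast_of_lt (by omega : y.val + h < m)]
      omega
    rw [hx, Nat.cast_add, natCast_val_self]
    ring
lemma nbhd_sup {V : Type*} (G H : SimpleGraph V) (x : V) :
    (G ⊔ H).neighborSet x = G.neighborSet x ∪ H.neighborSet x := by
  ext y
  simp [SimpleGraph.mem_neighborSet]

lemma exists_nearreg_oddodd (t : ℕ) (hmodd : Odd m) (hm : 2 * (2 * t + 1) + 3 ≤ m) :
    ∃ L : SimpleGraph (ZMod m),
      ∃ w, degp L w = 2 * t ∧ ∀ v, v ≠ w → degp L v = 2 * t + 1 := by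
  obtain ⟨c, hc⟩ := hmodd
  set h := (m - 1) / 2 with hhdef
  have hm2 : m = 2 * h + 1 := by omega
  have hh : 1 ≤ h := by omega
  have hmt : 2 * t + 1 ≤ m := by omega
  have hth : t + 1 ≤ h := by omega
  set Lc := circ (tset m t) (zero_not_mem_tset hmt) (neg_mem_tset hmt) with hLc
  set Lm := matchg m h hh with hLm
  have hvalh : ((h : ℕ) : ZMod m).val = h := ZMod.val_cast_of_lt (by omega)
  have hne : ((h : ℕ) : ZMod m) ≠ 0 := by
    intro hcon
    rw [hcon, ZMod.val_zero] at hvalh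
    omega
  have hvalnegh : (-((h : ℕ) : ZMod m)).val = h + 1 := by
    rw [ZMod.neg_val, if_neg hne, hvalh]
    omega
  have hdisj : ∀ x : ZMod m, Disjoint (Lc.neighborSet x) (Lm.neighborSet x) := by
    intro x
    rw [Set.disjoint_left]
    intro y hy1 hy2
    have hmem : x - y ∈ tset m t := hy1
    have hvb := val_mem_tset hmt _ hmem
    have hsub := matchg_sub hh hy2
    rcases hsub with hsub | hsub <;> rw [hsub] at hvb
    · rw [hvalnegh] at hvb; omega
    · rw [hvalh] at hvb; omega
  have hdeg : ∀ x : ZMod m, degp (Lc ⊔ Lm) x = 2 * t + (Lm.neighborSet x).ncard := by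
    intro x
    rw [degp, nbhd_sup, Set.ncard_union_eq (hdisj x) (Set.toFinite _) (Set.toFinite _)]
    congr 1
    rw [← degp, hLc, degp_circ, card_tset hmt]
  have hw2h : (((2 * h : ℕ)) : ZMod m).val = 2 * h := ZMod.val_cast_of_lt (by omega)
  refine ⟨Lc ⊔ Lm, ((2 * h : ℕ) : ZMod m), ?_, ?_⟩
  · rw [hdeg, hLm, nbhd_matchg hh hm2]
    rw [if_neg (by omega), if_pos (by rw [hw2h])]
    simp
  · intro v hv
    have hvne : v.val ≠ 2 * h := by
      intro hcon
      exact hv (by apply ZMod.val_injective; rw [hw2h, hcon])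
    have hvlt : v.val < m := ZMod.val_lt v
    rw [hdeg, hLm, nbhd_matchg hh hm2]
    by_cases h1 : v.val < h
    · rw [if_pos h1, Set.ncard_singleton]
    · rw [if_neg h1, if_neg hvne, Set.ncard_singleton]

lemma exists_nearRegular_zmod (ρ : ℕ) (hρ : 1 ≤ ρ) (hm : 2 * ρ + 3 ≤ m) :
    ∃ L : SimpleGraph (ZMod m), NearRegular ρ L := by
  have hcard : Fintype.card (ZMod m) = m := ZMod.card m
  by_cases hpar : Even ((ρ - 1) * m)
  · obtain ⟨L, hL⟩ := exists_regular (ρ - 1) (by rw [Nat.even_mul] at hpar; tauto) (by omega)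
    refine ⟨L, ?_⟩
    unfold NearRegular
    rw [hcard, if_pos hpar]
    exact hL
  · have hpar' := hpar
    rw [Nat.even_mul, not_or] at hpar'
    have h2 : Odd m := Nat.not_even_iff_odd.1 hpar'.2
    have h1 : Odd (ρ - 1) := Nat.not_even_iff_odd.1 hpar'.1
    obtain ⟨t, ht⟩ := h1
    obtain ⟨L, w, hw, hv⟩ := exists_nearreg_oddodd t h2 (by omega)
    refine ⟨L, ?_⟩
    unfold NearRegular
    rw [hcard, if_neg hpar]
    exact ⟨w, hw.trans (by omega), fun v hv' => (hv v hv').trans (by omega)⟩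

lemma exists_nearRegular_fin (ρ M : ℕ) (hρ : 1 ≤ ρ) (hM : 2 * ρ + 3 ≤ M) :
    ∃ L : SimpleGraph (Fin M), NearRegular ρ L := by
  have : NeZero M := ⟨by omega⟩
  obtain ⟨L, hL⟩ := exists_nearRegular_zmod ρ hρ hM
  have e : Fin M ≃ ZMod M := Fintype.equivOfCardEq (by rw [ZMod.card, Fintype.card_fin])
  refine ⟨L.comap e, ?_⟩
  unfold NearRegular at hL ⊢
  rw [ZMod.card] at hL
  rw [Fintype.card_fin]
  split_ifs at hL ⊢ with hcond
  · intro v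
    rw [degp_comap_equiv]
    exact hL (e v)
  · obtain ⟨w, hw, hvv⟩ := hL
    refine ⟨e.symm w, ?_, ?_⟩
    · rw [degp_comap_equiv, e.apply_symm_apply]
      exact hw
    · intro v hv'
      rw [degp_comap_equiv]
      exact hvv (e v) (fun hc => hv' (by rw [← hc, e.symm_apply_apply]))

lemma nearRegular_degp_lt {V : Type*} [Fintype V] {ρ : ℕ} (hρ : 1 ≤ ρ) {L : SimpleGraph V}
    (hL : NearRegular ρ L) : ∀ v, degp L v < ρ := by
  intro v
  unfold NearRegular at hL
  split_ifs at hL with hcond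
  · rw [hL v]; omega
  · obtain ⟨w, hw, hvv⟩ := hL
    by_cases hvw : v = w
    · rw [hvw, hw]; omega
    · rw [hvv v hvw]; omega

lemma nearRegular_degp_le {V : Type*} [Fintype V] {ρ : ℕ} {L : SimpleGraph V}
    (hL : NearRegular ρ L) : ∀ v, degp L v ≤ ρ - 1 := by
  intro v
  unfold NearRegular at hL
  split_ifs at hL with hcond
  · rw [hL v]
  · obtain ⟨w, hw, hvv⟩ := hL
    by_cases hvw : v = w
    · rw [hvw, hw]; omega
    · rw [hvv v hvw]

end circ

lemma pow_shift_le {p : ℕ} (x y : ℕ) (hxy : x ≤ y) :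
    (x + 1) ^ p + y ^ p ≤ (y + 1) ^ p + x ^ p := by
  have hx := add_pow x 1 p
  have hy := add_pow y 1 p
  simp only [one_pow, mul_one, Nat.cast_id] at hx hy
  rw [hx, hy, Finset.sum_range_succ, Finset.sum_range_succ]
  simp only [Nat.choose_self, mul_one]
  have hsum : (∑ i ∈ Finset.range p, x ^ i * p.choose i)
      ≤ ∑ i ∈ Finset.range p, y ^ i * p.choose i :=
    Finset.sum_le_sum fun i _ => Nat.mul_le_mul_right _ (Nat.pow_le_pow_left hxy i)
  omega

lemma pow_shift_lt {p : ℕ} (hp : 2 ≤ p) (x y : ℕ) (hxy : x < y) :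
    (x + 1) ^ p + y ^ p < (y + 1) ^ p + x ^ p := by
  have hx := add_pow x 1 p
  have hy := add_pow y 1 p
  simp only [one_pow, mul_one, Nat.cast_id] at hx hy
  rw [hx, hy, Finset.sum_range_succ, Finset.sum_range_succ]
  simp only [Nat.choose_self, mul_one]
  have hsum : (∑ i ∈ Finset.range p, x ^ i * p.choose i)
      < ∑ i ∈ Finset.range p, y ^ i * p.choose i := by
    refine Finset.sum_lt_sum (fun i _ => Nat.mul_le_mul_right _ (Nat.pow_le_pow_left hxy.le i))
      ⟨1, Finset.mem_range.2 (by omega), ?_⟩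
    have : p.choose 1 = p := Nat.choose_one_right p
    rw [this]
    simp only [pow_one]
    exact (Nat.mul_lt_mul_right (by omega : 0 < p)).2 hxy
  omega

lemma sum_eq_forcing {α : Type*} {s : Finset α} {f : α → ℕ} {c : ℕ}
    (h : ∀ x ∈ s, f x ≤ c) (heq : ∑ x ∈ s, f x = s.card * c) : ∀ x ∈ s, f x = c := by
  intro x hx
  by_contra hne
  have hlt : f x < c := lt_of_le_of_ne (h x hx) hne
  have : ∑ y ∈ s, f y < ∑ _y ∈ s, c :=
    Finset.sum_lt_sum h ⟨x, hx, hlt⟩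
  rw [Finset.sum_const, smul_eq_mul] at this
  omega

lemma full_adj {n : ℕ} {G : SimpleGraph (Fin n)} {a : Fin n}
    (ha : degp G a = n - 1) {u : Fin n} (hu : u ≠ a) : G.Adj a u := by
  classical
  have hd : (G.neighborFinset a).card = n - 1 := by
    rw [degp] at ha
    rw [← ha, SimpleGraph.neighborFinset_def, Set.ncard_eq_toFinset_card']
  have hsub : G.neighborFinset a ⊆ Finset.univ.erase a := by
    intro x hx
    rw [Finset.mem_erase]
    rw [SimpleGraph.mem_neighborFinset] at hx
    exact ⟨hx.ne', Finset.mem_univ x⟩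
  have hcard : (Finset.univ.erase a).card ≤ (G.neighborFinset a).card := by
    rw [hd, Finset.card_erase_of_mem (Finset.mem_univ a), Finset.card_univ, Fintype.card_fin]
  have heqs := Finset.eq_of_subset_of_card_le hsub hcard
  have : u ∈ G.neighborFinset a := by
    rw [heqs, Finset.mem_erase]
    exact ⟨hu, Finset.mem_univ u⟩
  rwa [SimpleGraph.mem_neighborFinset] at this

lemma build_structure {n k : ℕ} (hk : 2 ≤ k) (hn : k ≤ n)
    (G : SimpleGraph (Fin n)) (A : Finset (Fin n)) (hA : A.card = k - 1)
    (hfull : ∀ a ∈ A, degp G a = n - 1) :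
    ∃ (L : SimpleGraph (Fin (n - (k - 1)))) (e : Fin (n - (k - 1)) ≃ {x // x ∈ (Aᶜ : Finset (Fin n))}),
      (∀ x, degp L x + (k - 1) = degp G (e x : Fin n)) ∧
      Nonempty (G ≃g joinG (⊤ : SimpleGraph (Fin (k - 1))) L) := by
  classical
  have hAc : (Aᶜ : Finset (Fin n)).card = n - (k - 1) := by
    rw [Finset.card_compl, Fintype.card_fin, hA]
  have e : Fin (n - (k - 1)) ≃ {x // x ∈ (Aᶜ : Finset (Fin n))} :=
    ((Aᶜ : Finset (Fin n)).equivFinOfCardEq hAc).symm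
  have eA : Fin (k - 1) ≃ {x // x ∈ A} := (A.equivFinOfCardEq hA).symm
  set L : SimpleGraph (Fin (n - (k - 1))) := G.comap (fun x => (e x : Fin n)) with hLdef
  have hLadj : ∀ x y, L.Adj x y ↔ G.Adj (e x : Fin n) (e y : Fin n) := fun x y => Iff.rfl
  have hmemAc : ∀ x, ((e x : Fin n) ∈ (Aᶜ : Finset (Fin n))) := fun x => (e x).2
  have hcoe_inj : Function.Injective (fun x : Fin (n - (k-1)) => (e x : Fin n)) := by
    intro x y hxy
    exact e.injective (Subtype.ext hxy)
  -- degree relation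
  have hdeg : ∀ x, degp L x + (k - 1) = degp G (e x : Fin n) := by
    intro x
    have himg : (fun y : Fin (n - (k-1)) => (e y : Fin n)) '' (L.neighborSet x)
        = (G.neighborSet (e x : Fin n)) ∩ {u | u ∈ (Aᶜ : Finset (Fin n))} := by
      ext u
      constructor
      · rintro ⟨y, hy, rfl⟩
        exact ⟨hy, hmemAc y⟩
      · rintro ⟨hu1, hu2⟩
        refine ⟨e.symm ⟨u, hu2⟩, ?_, by simp⟩
        show G.Adj (e x : Fin n) ((e (e.symm ⟨u, hu2⟩)) : Fin n)
        rw [e.apply_symm_apply]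
        exact hu1
    have hsplit : G.neighborSet (e x : Fin n)
        = (A : Set (Fin n)) ∪ ((G.neighborSet (e x : Fin n)) ∩ {u | u ∈ (Aᶜ : Finset (Fin n))}) := by
      ext u
      simp only [Set.mem_union, Set.mem_inter_iff, Set.mem_setOf_eq, Finset.mem_coe,
        SimpleGraph.mem_neighborSet]
      constructor
      · intro hadj
        by_cases hu : u ∈ A
        · exact Or.inl hu
        · exact Or.inr ⟨hadj, Finset.mem_compl.2 hu⟩
      · rintro (hu | ⟨hadj, _⟩)
        · have hne : (e x : Fin n) ≠ u := by
            intro hcon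
            have := hmemAc x
            rw [hcon] at this
            exact (Finset.mem_compl.1 this) hu
          exact (full_adj (hfull u hu) hne).symm
        · exact hadj
    have hdisj : Disjoint (A : Set (Fin n))
        ((G.neighborSet (e x : Fin n)) ∩ {u | u ∈ (Aᶜ : Finset (Fin n))}) := by
      rw [Set.disjoint_left]
      rintro u hu ⟨-, hu2⟩
      exact (Finset.mem_compl.1 hu2) hu
    have hcount : degp G (e x : Fin n) = (k - 1) + degp L x := by
      rw [degp, hsplit, Set.ncard_union_eq hdisj (Set.toFinite _) (Set.toFinite _)]
      congr 1
      · rw [Set.ncard_coe_finset, hA]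
      · rw [← himg, Set.ncard_image_of_injective _ hcoe_inj, degp]
    omega
  refine ⟨L, e, hdeg, ?_⟩
  -- build the isomorphism
  have hbij : Function.Bijective (Sum.elim (fun a : Fin (k-1) => (eA a : Fin n))
      (fun b : Fin (n - (k-1)) => (e b : Fin n))) := by
    constructor
    · rintro (a | b) (a' | b') h
      · simp only [Sum.elim_inl] at h
        rw [eA.injective (Subtype.ext h)]
      · simp only [Sum.elim_inl, Sum.elim_inr] at h
        exact absurd ((eA a).2) (by rw [h]; exact Finset.mem_compl.1 (hmemAc b'))
      · simp only [Sum.elim_inl, Sum.elim_inr] at h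
        exact absurd ((eA a').2) (by rw [← h]; exact Finset.mem_compl.1 (hmemAc b))
      · simp only [Sum.elim_inr] at h
        rw [e.injective (Subtype.ext h)]
    · intro u
      by_cases hu : u ∈ A
      · exact ⟨Sum.inl (eA.symm ⟨u, hu⟩), by simp⟩
      · exact ⟨Sum.inr (e.symm ⟨u, Finset.mem_compl.2 hu⟩), by simp⟩
  set ψ := Equiv.ofBijective _ hbij with hψ
  have hψl : ∀ a, ψ (Sum.inl a) = (eA a : Fin n) := fun a => rfl
  have hψr : ∀ b, ψ (Sum.inr b) = (e b : Fin n) := fun b => rfl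
  refine ⟨(SimpleGraph.Iso.symm { toEquiv := ψ, map_rel_iff' := ?_ })⟩
  rintro (a | b) (a' | b')
  · rw [hψl, hψl, joinG_adj_ll]
    constructor
    · intro hadj hcon
      exact hadj.ne (by rw [hcon])
    · intro hne
      have hne' : (eA a : Fin n) ≠ (eA a' : Fin n) := by
        intro hcon
        exact hne (eA.injective (Subtype.ext hcon))
      exact full_adj (hfull _ (eA a).2) hne'.symm
  · rw [hψl, hψr]
    simp only [joinG_adj_lr, iff_true]
    have hne : (e b' : Fin n) ≠ (eA a : Fin n) := by
      intro hcon
      exact (Finset.mem_compl.1 (hmemAc b')) (by rw [hcon]; exact (eA a).2)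
    exact full_adj (hfull _ (eA a).2) hne
  · rw [hψr, hψl]
    simp only [joinG_adj_rl, iff_true]
    have hne : (e b : Fin n) ≠ (eA a' : Fin n) := by
      intro hcon
      exact (Finset.mem_compl.1 (hmemAc b)) (by rw [hcon]; exact (eA a').2)
    exact (full_adj (hfull _ (eA a').2) hne).symm
  · rw [hψr, hψr, joinG_adj_rr]
    exact (hLadj b b').symm

lemma ep_join_nearRegular (p K M ρ : ℕ) (L : SimpleGraph (Fin M)) (hL : NearRegular ρ L) :
    ep p (joinG (⊤ : SimpleGraph (Fin K)) L)
      = K * (K - 1 + M) ^ p +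
        (if Even ((ρ - 1) * M) then M * (K + (ρ - 1)) ^ p
         else (M - 1) * (K + (ρ - 1)) ^ p + (K + (ρ - 2)) ^ p) := by
  rw [ep_joinG]
  simp only [Fintype.card_fin]
  congr 1
  unfold NearRegular at hL
  rw [Fintype.card_fin] at hL
  by_cases hcond : Even ((ρ - 1) * M)
  · rw [if_pos hcond] at hL ⊢
    rw [Finset.sum_congr rfl (fun b _ => by rw [hL b]), Finset.sum_const, Finset.card_univ,
      Fintype.card_fin, smul_eq_mul]
  · rw [if_neg hcond] at hL ⊢
    obtain ⟨w, hw, hv⟩ := hL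
    rw [← Finset.sum_erase_add _ _ (Finset.mem_univ w)]
    congr 1
    · rw [Finset.sum_congr rfl (fun b hb => by rw [hv b (Finset.ne_of_mem_erase hb)]),
        Finset.sum_const, Finset.card_erase_of_mem (Finset.mem_univ w), Finset.card_univ,
        Fintype.card_fin, smul_eq_mul]
    · rw [hw]

lemma parity_lemma (k n ρ : ℕ) (hk : 2 ≤ k) (hkn : k + 1 ≤ n) (hρ : 1 ≤ ρ)
    (hodd1 : ¬ Even (ρ - 1)) (hodd2 : ¬ Even (n - k + 1)) :
    ¬ Even ((k - 1) * (n - 1) + (n - k + 1) * (ρ + k - 2)) := by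
  obtain ⟨b, hb⟩ := (Nat.not_even_iff_odd.1 hodd2)
  obtain ⟨c, hc⟩ := (Nat.not_even_iff_odd.1 hodd1)
  have e1 : n - 1 = (k - 1) + 2 * b := by omega
  have e2 : ρ + k - 2 = 2 * c + 1 + (k - 1) := by omega
  rw [e1, e2, hb]
  intro hE
  rcases Nat.even_or_odd (k - 1) with he | ho
  · obtain ⟨d, hd⟩ := he
    simp only [Nat.even_add, Nat.even_mul] at hE
    have h2b : Even (2 * b) := ⟨b, by omega⟩
    have h2b1 : ¬ Even (2 * b + 1) := by rintro ⟨q, hq⟩; omega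
    have hodd3 : ¬ Even (2 * c + 1 + (k - 1)) := by rintro ⟨q, hq⟩; omega
    have heK : Even (k - 1) := ⟨d, hd⟩
    tauto
  · obtain ⟨d, hd⟩ := ho
    have ho' : ¬ Even (k - 1) := by rintro ⟨q, hq⟩; omega
    simp only [Nat.even_add, Nat.even_mul] at hE
    have h2b : Even (2 * b) := ⟨b, by omega⟩
    have h2b1 : ¬ Even (2 * b + 1) := by rintro ⟨q, hq⟩; omega
    have hsum : ¬ Even ((k - 1) + 2 * b) := by rintro ⟨q, hq⟩; omega
    have hodd3 : Even (2 * c + 1 + (k - 1)) := ⟨c + 1 + d, by omega⟩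
    tauto

lemma degp_eq_card_nbhd {V : Type*} [Fintype V] (G : SimpleGraph V) [DecidableRel G.Adj] (v : V) :
    degp G v = (G.neighborFinset v).card := degp_eq_degree G v

noncomputable def Tval (n k p ρ : ℕ) : ℕ :=
  if Even (ρ - 1) ∨ Even (n - k + 1) then
    (k - 1) * (n - 1) ^ p + (n - k + 1) * (ρ + k - 2) ^ p
  else
    (k - 1) * (n - 1) ^ p + (n - k) * (ρ + k - 2) ^ p + (ρ + k - 3) ^ p

lemma hard {n k p : ℕ} (hk : 2 ≤ k) (hp : 2 ≤ p) (r : Fin k → ℕ)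
    (hdec : ∀ i j : Fin k, i ≤ j → r j ≤ r i) (hr1 : ∀ i, 1 ≤ r i)
    (ρ R : ℕ) (hρdef : ρ = r ⟨k - 1, Nat.sub_lt (by omega) Nat.one_pos⟩) (hRdef : R = r ⟨0, by omega⟩)
    (hn : 2 * (k * R + k + (ρ + k - 2) + 2) ^ p + 4 * (k * R + k + (ρ + k - 2) + 2)
        + 4 * k + 42 ≤ n)
    (G : SimpleGraph (Fin n))
    (hfree : Free (forestG (fun i => r i + 1) (fun i => starG (r i))) G) :
    ep p G ≤ Tval n k p ρ ∧
      (ep p G = Tval n k p ρ →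
        ∃ L : SimpleGraph (Fin (n - (k - 1))), NearRegular ρ L ∧
          Nonempty (G ≃g joinG (⊤ : SimpleGraph (Fin (k - 1))) L)) := by
  classical
  set s := ρ + k - 2 with hsdef
  set D := k * R + k + s + 2 with hDdef
  have hρ1 : 1 ≤ ρ := by rw [hρdef]; exact hr1 _
  have hρle : ∀ i, ρ ≤ r i := by
    intro i
    rw [hρdef]
    refine hdec i _ ?_
    rw [Fin.le_def]
    have := i.isLt
    simp only []
    omega
  have hRge : ∀ i, r i ≤ R := by
    intro i
    rw [hRdef]
    refine hdec ⟨0, by omega⟩ i ?_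
    rw [Fin.le_def]
    simp
  have hDp : D ≤ D ^ p := Nat.le_self_pow (by omega) D
  have hnbig : 2 * D ^ p + 4 * D + 4 * k + 42 ≤ n := hn
  have hDs : s + 2 ≤ D := by omega
  have hρs : ρ ≤ s := by omega
  have hnk : k + D + 5 ≤ n := by omega
  have hnDp : n * D ^ p < (n - 1) ^ p := by
    have h1 : (n - 1) ^ 2 ≤ (n - 1) ^ p := Nat.pow_le_pow_right (by omega) hp
    have hC1 : 1 ≤ D ^ p := Nat.one_le_pow _ _ (by omega)
    obtain ⟨a, ha⟩ : ∃ a, n = a + 1 := ⟨n - 1, by omega⟩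
    have hna : n - 1 = a := by omega
    have h2 : n * D ^ p < (n - 1) ^ 2 := by
      rw [hna, ha, pow_two]
      have hbound : 2 * D ^ p + 41 ≤ a := by omega
      nlinarith [Nat.mul_le_mul_left a hbound, hC1]
    omega
  set A := Finset.univ.filter (fun v => D ≤ degp G v) with hAdef
  have hdegn : ∀ v, degp G v ≤ n - 1 := by
    intro v
    have := degp_le G v
    simpa using this
  have hsumub : ∀ i : Fin k, (∑ j, if i ≤ j then r j else 0) ≤ k * R := by
    intro i
    calc (∑ j, if i ≤ j then r j else 0) ≤ ∑ j, r j :=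
          Finset.sum_le_sum (fun j _ => by split <;> omega)
      _ ≤ ∑ _j : Fin k, R := Finset.sum_le_sum (fun j _ => hRge j)
      _ = k * R := by rw [Finset.sum_const, Finset.card_univ, Fintype.card_fin, smul_eq_mul]
  have hAk : A.card ≤ k - 1 := by
    by_contra hcon
    push_neg at hcon
    obtain ⟨A', hA'sub, hA'card⟩ := Finset.exists_subset_card_eq (show k ≤ A.card by omega)
    have eA' : Fin k ≃ {x // x ∈ A'} := (A'.equivFinOfCardEq hA'card).symm
    refine hfree (copy_of_centers G r (fun i => (eA' i : Fin n))
      (fun i j h => eA'.injective (Subtype.ext h)) ?_)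
    intro i
    show (∑ j, if i ≤ j then r j else 0)
      ≤ ((G.neighborFinset ((eA' i : Fin n)))
          \ (Finset.image (fun i => ((eA' i : Fin n))) Finset.univ)).card
    have hvA : (eA' i : Fin n) ∈ A := hA'sub (eA' i).2
    have hdi : D ≤ degp G (eA' i : Fin n) := (Finset.mem_filter.1 hvA).2
    rw [degp_eq_card_nbhd] at hdi
    have h1 := Finset.le_card_sdiff
      (Finset.image (fun i => ((eA' i : Fin n))) Finset.univ) (G.neighborFinset (eA' i : Fin n))
    have hC : (Finset.image (fun i => ((eA' i : Fin n))) Finset.univ).card ≤ k := by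
      refine le_trans (Finset.card_image_le) ?_
      rw [Finset.card_univ, Fintype.card_fin]
    have hs2 := hsumub i
    omega
  have hsmall : A.card = k - 1 → ∀ w, w ∉ A → degp G w ≤ s := by
    intro hAcard w hw
    by_contra hcon
    push_neg at hcon
    have hwdeg : s + 1 ≤ degp G w := hcon
    have eA : Fin (k - 1) ≃ {x // x ∈ A} := (A.equivFinOfCardEq hAcard).symm
    set v : Fin k → Fin n :=
      fun i => if h : (i : ℕ) < k - 1 then (eA ⟨i, h⟩ : Fin n) else w with hvdef
    have hvmem : ∀ (i : Fin k) (h : (i : ℕ) < k - 1), v i ∈ A := by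
      intro i h
      simp only [hvdef, dif_pos h]
      exact (eA ⟨i, h⟩).2
    have hvinj : Function.Injective v := by
      intro i j hij
      by_cases hi : (i : ℕ) < k - 1 <;> by_cases hj : (j : ℕ) < k - 1
      · simp only [hvdef, dif_pos hi, dif_pos hj] at hij
        have := eA.injective (Subtype.ext hij)
        have := congrArg (fun x : Fin (k-1) => (x : ℕ)) this
        exact Fin.ext (by simpa using this)
      · exfalso
        simp only [hvdef, dif_pos hi, dif_neg hj] at hij
        exact hw (hij ▸ (eA ⟨i, hi⟩).2)
      · exfalso
        simp only [hvdef, dif_neg hi, dif_pos hj] at hij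
        exact hw (hij ▸ (eA ⟨j, hj⟩).2)
      · have h1 := i.isLt
        have h2 := j.isLt
        exact Fin.ext (by omega)
    refine hfree (copy_of_centers G r v hvinj ?_)
    intro i
    have hCcard : (Finset.image v Finset.univ).card ≤ k := by
      refine le_trans (Finset.card_image_le) ?_
      rw [Finset.card_univ, Fintype.card_fin]
    by_cases hi : (i : ℕ) < k - 1
    · have hdi : D ≤ degp G (v i) := (Finset.mem_filter.1 (hvmem i hi)).2
      rw [degp_eq_card_nbhd] at hdi
      have h1 := Finset.le_card_sdiff (Finset.image v Finset.univ) (G.neighborFinset (v i))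
      have hs2 := hsumub i
      omega
    · -- i is the top index, v i = w
      have hvi : v i = w := by simp only [hvdef, dif_neg hi]
      have hiK : i = (⟨k - 1, by omega⟩ : Fin k) := by
        have := i.isLt
        exact Fin.ext (by simp; omega)
      have hsum : (∑ j, if i ≤ j then r j else 0) = ρ := by
        rw [Finset.sum_eq_single i]
        · rw [if_pos le_rfl, hiK, ← hρdef]
        · intro j _ hj
          rw [if_neg]
          intro hle
          refine hj (le_antisymm ?_ hle)
          rw [hiK, Fin.le_def]
          have := j.isLt
          simp only []
          omega
        · intro hmem
          exact absurd (Finset.mem_univ i) hmem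
      rw [hsum, hvi]
      -- #(nb w \ C) ≥ (s+1) - (k-1) ≥ ρ
      have hwnb : w ∉ G.neighborFinset w := by simp
      have herase : G.neighborFinset w \ Finset.image v Finset.univ
          = G.neighborFinset w \ (Finset.image v Finset.univ).erase w := by
        ext x
        simp only [Finset.mem_sdiff, Finset.mem_erase]
        constructor
        · rintro ⟨hx1, hx2⟩
          exact ⟨hx1, fun hc => hx2 hc.2⟩
        · rintro ⟨hx1, hx2⟩
          refine ⟨hx1, fun hc => ?_⟩
          have hxw : x ≠ w := by
            intro hcon
            rw [hcon] at hx1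
            exact hwnb hx1
          exact hx2 ⟨hxw, hc⟩
      have hwC : w ∈ Finset.image v Finset.univ := by
        refine Finset.mem_image.2 ⟨⟨k - 1, by omega⟩, Finset.mem_univ _, ?_⟩
        simp only [hvdef, dif_neg (by simp : ¬((⟨k - 1, by omega⟩ : Fin k) : ℕ) < k - 1)]
      have hecard : ((Finset.image v Finset.univ).erase w).card ≤ k - 1 := by
        rw [Finset.card_erase_of_mem hwC]
        omega
      have h1 := Finset.le_card_sdiff ((Finset.image v Finset.univ).erase w)
        (G.neighborFinset w)
      rw [← herase] at h1
      rw [degp_eq_card_nbhd] at hwdeg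
      omega
  -- sum splitting
  have hsplit : ep p G = (∑ v ∈ A, degp G v ^ p) + ∑ v ∈ Aᶜ, degp G v ^ p := by
    rw [ep, ← Finset.sum_filter_add_sum_filter_not Finset.univ (fun v => D ≤ degp G v)
      (fun v => degp G v ^ p)]
    congr 1
    apply Finset.sum_congr _ (fun _ _ => rfl)
    ext x
    simp [hAdef]
  have hboundA : (∑ v ∈ A, degp G v ^ p) ≤ A.card * (n - 1) ^ p := by
    calc (∑ v ∈ A, degp G v ^ p) ≤ ∑ _v ∈ A, (n - 1) ^ p :=
          Finset.sum_le_sum (fun v _ => Nat.pow_le_pow_left (hdegn v) p)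
      _ = A.card * (n - 1) ^ p := by rw [Finset.sum_const, smul_eq_mul]
  have hTge : (k - 1) * (n - 1) ^ p ≤ Tval n k p ρ := by
    unfold Tval
    split_ifs <;> omega
  rcases Nat.lt_or_ge A.card (k - 1) with hA2 | hA2
  · -- small A: strictly below
    have hAcub : ∀ v ∈ Aᶜ, degp G v ^ p ≤ D ^ p := by
      intro v hv
      have : ¬ (D ≤ degp G v) := by
        have := Finset.mem_compl.1 hv
        simpa [hAdef] using this
      exact Nat.pow_le_pow_left (by omega) p
    have hboundAc : (∑ v ∈ Aᶜ, degp G v ^ p) ≤ n * D ^ p := by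
      calc (∑ v ∈ Aᶜ, degp G v ^ p) ≤ ∑ _v ∈ Aᶜ, D ^ p := Finset.sum_le_sum hAcub
        _ = (Aᶜ).card * D ^ p := by rw [Finset.sum_const, smul_eq_mul]
        _ ≤ n * D ^ p := by
            refine Nat.mul_le_mul_right _ ?_
            calc (Aᶜ).card ≤ Fintype.card (Fin n) := Finset.card_le_univ _
              _ = n := Fintype.card_fin n
    have hAle : (∑ v ∈ A, degp G v ^ p) ≤ (k - 2) * (n - 1) ^ p := by
      refine le_trans hboundA (Nat.mul_le_mul_right _ (by omega))
    have hlt : ep p G < (k - 1) * (n - 1) ^ p := by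
      have hclean : (k - 1) * (n - 1) ^ p = (k - 2) * (n - 1) ^ p + (n - 1) ^ p := by
        have e : k - 1 = (k - 2) + 1 := by omega
        rw [e, add_mul, one_mul]
      rw [hsplit, hclean]
      have := hnDp
      omega
    exact ⟨le_of_lt (lt_of_lt_of_le hlt hTge),
      fun heq => absurd heq (ne_of_lt (lt_of_lt_of_le hlt hTge))⟩
  · -- A.card = k - 1
    have hA2' : A.card = k - 1 := le_antisymm hAk hA2
    have hsmall' : ∀ w ∈ Aᶜ, degp G w ≤ s := fun w hw =>
      hsmall hA2' w (Finset.mem_compl.1 hw)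
    have hAccard : (Aᶜ : Finset (Fin n)).card = n - k + 1 := by
      rw [Finset.card_compl, Fintype.card_fin, hA2']
      omega
    have hboundAc : (∑ v ∈ Aᶜ, degp G v ^ p) ≤ (n - k + 1) * s ^ p := by
      calc (∑ v ∈ Aᶜ, degp G v ^ p) ≤ ∑ _v ∈ Aᶜ, s ^ p :=
            Finset.sum_le_sum (fun v hv => Nat.pow_le_pow_left (hsmall' v hv) p)
        _ = (n - k + 1) * s ^ p := by rw [Finset.sum_const, smul_eq_mul, hAccard]
    have hboundA' : (∑ v ∈ A, degp G v ^ p) ≤ (k - 1) * (n - 1) ^ p := by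
      rw [← hA2']; exact hboundA
    by_cases hcond : Even (ρ - 1) ∨ Even (n - k + 1)
    · -- even case
      have hT : Tval n k p ρ = (k - 1) * (n - 1) ^ p + (n - k + 1) * s ^ p := by
        unfold Tval
        rw [if_pos hcond, hsdef]
      constructor
      · rw [hT, hsplit]
        omega
      · intro heq
        rw [hT] at heq
        rw [hsplit] at heq
        have hEA : (∑ v ∈ A, degp G v ^ p) = (k - 1) * (n - 1) ^ p := by omega
        have hEAc : (∑ v ∈ Aᶜ, degp G v ^ p) = (n - k + 1) * s ^ p := by omega
        have hAall : ∀ a ∈ A, degp G a = n - 1 := by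
          intro a ha
          exact Nat.pow_left_injective (show p ≠ 0 by omega)
            (sum_eq_forcing (fun v hv => Nat.pow_le_pow_left (hdegn v) p)
              (by rw [hEA, hA2']) a ha)
        have hAcall : ∀ w ∈ Aᶜ, degp G w = s := by
          intro w hw
          exact Nat.pow_left_injective (show p ≠ 0 by omega)
            (sum_eq_forcing (fun v hv => Nat.pow_le_pow_left (hsmall' v hv) p)
              (by rw [hEAc, hAccard]) w hw)
        obtain ⟨L, e, hdeg, hiso⟩ := build_structure hk (by omega) G A hA2' hAall
        refine ⟨L, ?_, hiso⟩
        unfold NearRegular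
        rw [Fintype.card_fin]
        have hm : n - (k - 1) = n - k + 1 := by omega
        rw [if_pos (by rw [hm, Nat.even_mul]; tauto)]
        intro x
        have h1 := hdeg x
        have h2 : degp G (e x : Fin n) = s := hAcall _ (e x).2
        omega
    · -- odd case
      push_neg at hcond
      obtain ⟨hodd1, hodd2⟩ := hcond
      have hρ2 : 2 ≤ ρ := by
        rcases Nat.even_or_odd (ρ - 1) with he | ho
        · exact absurd he hodd1
        · obtain ⟨c, hc⟩ := ho; omega
      have hs1 : 1 ≤ s := by omega
      have hT : Tval n k p ρ = (k - 1) * (n - 1) ^ p + (n - k) * s ^ p + (s - 1) ^ p := by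
        unfold Tval
        rw [if_neg (by push_neg; exact ⟨hodd1, hodd2⟩), hsdef,
          show ρ + k - 2 - 1 = ρ + k - 3 from by omega]
      have hmulrw : (n - k + 1) * s ^ p = (n - k) * s ^ p + s ^ p := by
        rw [add_mul, one_mul]
      by_cases hfullA : ∀ a ∈ A, degp G a = n - 1
      · -- all big vertices full
        have hSA : (∑ v ∈ A, degp G v ^ p) = (k - 1) * (n - 1) ^ p := by
          rw [Finset.sum_congr rfl (fun a ha => by rw [hfullA a ha]), Finset.sum_const,
            smul_eq_mul, hA2']
        have hex : ∃ w ∈ Aᶜ, degp G w ≤ s - 1 := by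
          by_contra hcon2
          push_neg at hcon2
          have hall : ∀ w ∈ Aᶜ, degp G w = s := by
            intro w hw
            have h1 := hsmall' w hw
            have h2 := hcon2 w hw
            omega
          have htot : (∑ v, degp G v) = (k - 1) * (n - 1) + (n - k + 1) * s := by
            rw [← Finset.sum_filter_add_sum_filter_not Finset.univ (fun v => D ≤ degp G v)
              (fun v => degp G v)]
            have hfa : Finset.univ.filter (fun v => ¬ D ≤ degp G v) = Aᶜ := by
              ext x
              simp [hAdef]
            congr 1
            · rw [show Finset.univ.filter (fun v => D ≤ degp G v) = A from rfl,
                Finset.sum_congr rfl (fun a ha => hfullA a ha), Finset.sum_const, smul_eq_mul,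
                hA2']
            · rw [hfa, Finset.sum_congr rfl (fun w hw => hall w hw), Finset.sum_const,
                smul_eq_mul, hAccard]
          exact parity_lemma k n ρ hk (by omega) hρ1 hodd1 hodd2 (htot ▸ even_sum_degp G)
        obtain ⟨w, hw, hwdeg⟩ := hex
        have hsum_split : (∑ v ∈ Aᶜ, degp G v ^ p)
            = (∑ v ∈ (Aᶜ).erase w, degp G v ^ p) + degp G w ^ p :=
          (Finset.sum_erase_add _ _ hw).symm
        have hecard : ((Aᶜ).erase w).card = n - k := by
          rw [Finset.card_erase_of_mem hw, hAccard]
          omega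
        have heb : (∑ v ∈ (Aᶜ).erase w, degp G v ^ p) ≤ (n - k) * s ^ p := by
          calc (∑ v ∈ (Aᶜ).erase w, degp G v ^ p) ≤ ∑ _v ∈ (Aᶜ).erase w, s ^ p :=
                Finset.sum_le_sum (fun v hv =>
                  Nat.pow_le_pow_left (hsmall' v (Finset.mem_of_mem_erase hv)) p)
            _ = (n - k) * s ^ p := by rw [Finset.sum_const, smul_eq_mul, hecard]
        have hwb : degp G w ^ p ≤ (s - 1) ^ p := Nat.pow_le_pow_left hwdeg p
        constructor
        · rw [hT, hsplit, hsum_split]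
          omega
        · intro heq
          rw [hT] at heq
          rw [hsplit, hsum_split] at heq
          -- all of erase are s, w has s - 1
          have hothers : ∀ v ∈ (Aᶜ).erase w, degp G v = s := by
            intro v hv
            by_contra hne
            have hvs : degp G v ≤ s - 1 := by
              have := hsmall' v (Finset.mem_of_mem_erase hv)
              omega
            have hsum_split2 : (∑ u ∈ (Aᶜ).erase w, degp G u ^ p)
                = (∑ u ∈ ((Aᶜ).erase w).erase v, degp G u ^ p) + degp G v ^ p :=
              (Finset.sum_erase_add _ _ hv).symm
            have hecard2 : (((Aᶜ).erase w).erase v).card = n - k - 1 := by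
              rw [Finset.card_erase_of_mem hv, hecard]
            have heb2 : (∑ u ∈ ((Aᶜ).erase w).erase v, degp G u ^ p) ≤ (n - k - 1) * s ^ p := by
              calc (∑ u ∈ ((Aᶜ).erase w).erase v, degp G u ^ p)
                  ≤ ∑ _u ∈ ((Aᶜ).erase w).erase v, s ^ p :=
                    Finset.sum_le_sum (fun u hu => Nat.pow_le_pow_left
                      (hsmall' u (Finset.mem_of_mem_erase (Finset.mem_of_mem_erase hu))) p)
                _ = (n - k - 1) * s ^ p := by rw [Finset.sum_const, smul_eq_mul, hecard2]
            have hvb : degp G v ^ p ≤ (s - 1) ^ p := Nat.pow_le_pow_left hvs p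
            have hslt : (s - 1) ^ p < s ^ p :=
              Nat.pow_lt_pow_left (by omega) (by omega)
            have hmul2 : (n - k) * s ^ p = (n - k - 1) * s ^ p + s ^ p := by
              set q := n - k - 1 with hq
              have e : n - k = q + 1 := by omega
              rw [e, add_mul, one_mul]
            omega
          have hSe : (∑ v ∈ (Aᶜ).erase w, degp G v ^ p) = (n - k) * s ^ p := by
            rw [Finset.sum_congr rfl (fun v hv => by rw [hothers v hv]), Finset.sum_const,
              smul_eq_mul, hecard]
          have hwdeg' : degp G w = s - 1 := by
            refine Nat.pow_left_injective (show p ≠ 0 by omega) ?_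
            show degp G w ^ p = (s - 1) ^ p
            omega
          obtain ⟨L, e, hdeg, hiso⟩ := build_structure hk (by omega) G A hA2' hfullA
          refine ⟨L, ?_, hiso⟩
          unfold NearRegular
          rw [Fintype.card_fin]
          have hm : n - (k - 1) = n - k + 1 := by omega
          rw [if_neg (by rw [hm, Nat.even_mul]; tauto)]
          refine ⟨e.symm ⟨w, hw⟩, ?_, ?_⟩
          · have h1 := hdeg (e.symm ⟨w, hw⟩)
            rw [e.apply_symm_apply] at h1
            simp only [] at h1
            rw [hwdeg'] at h1
            omega
          · intro x hx
            have h1 := hdeg x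
            have hvw : (e x : Fin n) ≠ w := by
              intro hcon
              apply hx
              have h2 : e x = ⟨w, hw⟩ := Subtype.ext hcon
              rw [← h2, e.symm_apply_apply]
            have hmem2 : (e x : Fin n) ∈ (Aᶜ).erase w := Finset.mem_erase.2 ⟨hvw, (e x).2⟩
            have h3 := hothers _ hmem2
            omega
      · -- some big vertex deficient : strict inequality
        push_neg at hfullA
        obtain ⟨a0, ha0A, ha0ne⟩ := hfullA
        have ha0le : degp G a0 ≤ n - 2 := by
          have := hdegn a0
          omega
        have hSA : (∑ v ∈ A, degp G v ^ p) ≤ (k - 2) * (n - 1) ^ p + (n - 2) ^ p := by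
          rw [← Finset.sum_erase_add _ _ ha0A]
          have h1 : (∑ v ∈ A.erase a0, degp G v ^ p) ≤ (k - 2) * (n - 1) ^ p := by
            calc (∑ v ∈ A.erase a0, degp G v ^ p) ≤ ∑ _v ∈ A.erase a0, (n - 1) ^ p :=
                  Finset.sum_le_sum (fun v _ => Nat.pow_le_pow_left (hdegn v) p)
              _ = (k - 2) * (n - 1) ^ p := by
                  rw [Finset.sum_const, smul_eq_mul, Finset.card_erase_of_mem ha0A, hA2',
                    show k - 1 - 1 = k - 2 from by omega]
          have h2 : degp G a0 ^ p ≤ (n - 2) ^ p := Nat.pow_le_pow_left ha0le p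
          omega
        have hkey : s ^ p + (n - 2) ^ p < (n - 1) ^ p + (s - 1) ^ p := by
          have h0 := pow_shift_lt hp (s - 1) (n - 2) (by omega)
          have e1 : s - 1 + 1 = s := by omega
          have e2 : n - 2 + 1 = n - 1 := by omega
          rw [e1, e2] at h0
          exact h0
        have hclean : (k - 1) * (n - 1) ^ p = (k - 2) * (n - 1) ^ p + (n - 1) ^ p := by
          have e : k - 1 = (k - 2) + 1 := by omega
          rw [e, add_mul, one_mul]
        have step1 : ep p G ≤ (k - 2) * (n - 1) ^ p + (n - 2) ^ p
            + ((n - k) * s ^ p + s ^ p) := by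
          rw [hsplit]
          have h2 := hboundAc
          rw [hmulrw] at h2
          exact Nat.add_le_add hSA h2
        have step2 : (k - 2) * (n - 1) ^ p + (n - 2) ^ p + ((n - k) * s ^ p + s ^ p)
            < (k - 2) * (n - 1) ^ p + (n - 1) ^ p + ((n - k) * s ^ p + (s - 1) ^ p) := by
          have h3 := hkey
          omega
        have hlt : ep p G < Tval n k p ρ := by
          rw [hT, hclean]
          calc ep p G < (k - 2) * (n - 1) ^ p + (n - 1) ^ p
              + ((n - k) * s ^ p + (s - 1) ^ p) := lt_of_le_of_lt step1 step2
            _ = (k - 2) * (n - 1) ^ p + (n - 1) ^ p + (n - k) * s ^ p + (s - 1) ^ p := by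
                omega
        exact ⟨le_of_lt hlt, fun heq => absurd heq (ne_of_lt hlt)⟩

open scoped Classical in
/-- degree-power Turán number of a star forest. -/
theorem starForest_exDP (k p : ℕ) (hk : 2 ≤ k) (hp : 2 ≤ p) (r : Fin k → ℕ)
    (hdec : ∀ i j : Fin k, i ≤ j → r j ≤ r i) (hr1 : ∀ i, 1 ≤ r i) :
    ∃ n0 : ℕ, ∀ n, n0 ≤ n →
      (∀ L : SimpleGraph (Fin (n - (k - 1))), NearRegular (r ⟨k - 1, by omega⟩) L →
        exDP n p (forestG (fun i => r i + 1) (fun i => starG (r i)))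
          = ep p (joinG (⊤ : SimpleGraph (Fin (k - 1))) L)) ∧
      (exDP n p (forestG (fun i => r i + 1) (fun i => starG (r i))) =
        if Even (r ⟨k - 1, by omega⟩ - 1) ∨ Even (n - k + 1) then
          (k - 1) * (n - 1) ^ p + (n - k + 1) * (r ⟨k - 1, by omega⟩ + k - 2) ^ p
        else
          (k - 1) * (n - 1) ^ p + (n - k) * (r ⟨k - 1, by omega⟩ + k - 2) ^ p
            + (r ⟨k - 1, by omega⟩ + k - 3) ^ p) ∧
      (∀ G : SimpleGraph (Fin n),
        Free (forestG (fun i => r i + 1) (fun i => starG (r i))) G →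
          (ep p G = exDP n p (forestG (fun i => r i + 1) (fun i => starG (r i))) ↔
            ∃ L : SimpleGraph (Fin (n - (k - 1))), NearRegular (r ⟨k - 1, by omega⟩) L ∧
              Nonempty (G ≃g joinG (⊤ : SimpleGraph (Fin (k - 1))) L))) := by
  set ρ : ℕ := r ⟨k - 1, by omega⟩ with hρdef
  set R : ℕ := r ⟨0, by omega⟩ with hRdef
  refine ⟨2 * (k * R + k + (ρ + k - 2) + 2) ^ p + 4 * (k * R + k + (ρ + k - 2) + 2)
    + 4 * k + 42, ?_⟩
  intro n hn
  set F := forestG (fun i => r i + 1) (fun i => starG (r i)) with hF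
  have hρ1 : 1 ≤ ρ := hr1 _
  have hρR : ρ ≤ R := by
    rw [hρdef, hRdef]
    refine hdec ⟨0, by omega⟩ ⟨k - 1, by omega⟩ ?_
    rw [Fin.le_def]
    simp
  have hρle : ∀ i, ρ ≤ r i := by
    intro i
    rw [hρdef]
    refine hdec i _ ?_
    rw [Fin.le_def]
    have := i.isLt
    simp only []
    omega
  set D := k * R + k + (ρ + k - 2) + 2 with hDdef
  have hDp : D ≤ D ^ p := Nat.le_self_pow (by omega) D
  have hnk : k + D + 5 ≤ n := by omega
  have hmge : 2 * ρ + 3 ≤ n - (k - 1) := by omega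
  -- a witness near-regular graph
  obtain ⟨L0, hL0⟩ := exists_nearRegular_fin ρ (n - (k - 1)) hρ1 hmge
  -- the witness graph on Fin n
  have hcards : Fintype.card (Fin n)
      = Fintype.card ((Fin (k - 1)) ⊕ (Fin (n - (k - 1)))) := by
    rw [Fintype.card_fin, Fintype.card_sum, Fintype.card_fin, Fintype.card_fin]
    omega
  have ψe : Fin n ≃ ((Fin (k - 1)) ⊕ (Fin (n - (k - 1)))) := Fintype.equivOfCardEq hcards
  set Gw : SimpleGraph (Fin n) := (joinG (⊤ : SimpleGraph (Fin (k - 1))) L0).comap ψe with hGw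
  have φw : Gw ≃g joinG (⊤ : SimpleGraph (Fin (k - 1))) L0 :=
    { toEquiv := ψe, map_rel_iff' := Iff.rfl }
  have hfreeJ : Free F (joinG (⊤ : SimpleGraph (Fin (k - 1))) L0) := by
    rw [hF]
    refine joinG_free L0 r ρ hρle ?_ (nearRegular_degp_lt hρ1 hL0)
    rw [Fintype.card_fin]
    omega
  have hfreeW : Free F Gw := free_iso φw.symm hfreeJ
  -- value conversion
  have hconv : ∀ L : SimpleGraph (Fin (n - (k - 1))), NearRegular ρ L →
      ep p (joinG (⊤ : SimpleGraph (Fin (k - 1))) L) = Tval n k p ρ := by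
    intro L hL
    rw [ep_join_nearRegular p (k - 1) (n - (k - 1)) ρ L hL]
    unfold Tval
    have e1 : k - 1 - 1 + (n - (k - 1)) = n - 1 := by omega
    have e2 : n - (k - 1) = n - k + 1 := by omega
    have e3 : k - 1 + (ρ - 1) = ρ + k - 2 := by omega
    rw [e1, e2, e3]
    by_cases hcond : Even (ρ - 1) ∨ Even (n - k + 1)
    · rw [if_pos hcond, if_pos (by rw [Nat.even_mul]; tauto)]
    · push_neg at hcond
      have hρ2 : 2 ≤ ρ := by
        rcases Nat.even_or_odd (ρ - 1) with he | ho
        · exact absurd he hcond.1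
        · obtain ⟨c, hc⟩ := ho; omega
      have e4 : k - 1 + (ρ - 2) = ρ + k - 3 := by omega
      have e5 : n - k + 1 - 1 = n - k := by omega
      rw [if_neg (by rw [Nat.even_mul]; push_neg; exact hcond),
        if_neg (by push_neg; exact hcond), e4, e5]
      omega
  have hepW : ep p Gw = Tval n k p ρ := by
    rw [ep_iso φw p]
    exact hconv L0 hL0
  -- exDP = Tval
  have hub : ∀ x ∈ {m | ∃ G : SimpleGraph (Fin n), Free F G ∧ ep p G = m}, x ≤ Tval n k p ρ := by
    rintro x ⟨G', hfree', rfl⟩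
    exact (hard hk hp r hdec hr1 ρ R hρdef hRdef hn G' hfree').1
  have hmem : Tval n k p ρ ∈ {m | ∃ G : SimpleGraph (Fin n), Free F G ∧ ep p G = m} :=
    ⟨Gw, hfreeW, hepW⟩
  have hsup : exDP n p F = Tval n k p ρ := by
    rw [exDP]
    exact le_antisymm (csSup_le ⟨_, hmem⟩ hub)
      (le_csSup ⟨Tval n k p ρ, fun x hx => hub x hx⟩ hmem)
  refine ⟨?_, ?_, ?_⟩
  · intro L hL
    rw [hsup, hconv L hL]
  · rw [hsup]
    unfold Tval
    rfl
  · intro G hfreeG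
    constructor
    · intro heq
      exact (hard hk hp r hdec hr1 ρ R hρdef hRdef hn G hfreeG).2 (heq.trans hsup)
    · rintro ⟨L, hL, ⟨φ⟩⟩
      rw [hsup, ep_iso φ p, hconv L hL]

end Paper
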